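/- Let k be a commutative ring and R a k-algebra with a topology such that R is a local ring and such that for every commutative k-algebra A and every f ∈ A, the map Hom_{k-alg}(A_f, R) → Hom_{k-alg}(A, R) induced by the localization A → A_f is an open topological embedding with respect to the affine topologies. Then for every k-scheme X and every affine open covering {U_i}_{i∈I} of X: X(R) = ⋃_{i∈I} U_i(R), and a subset W of X(R) is open in the fine topology if and only if W ∩ U_i(R) is open in U_i(R) in the fine topology for every i ∈ I. -/

import Mathlib

open AlgebraicGeometry CategoryTheory CategoryTheory.Limits Opposite TopologicalSpace

universe u

noncomputable section

/-- The affine topology on the set of `k`-algebra homomorphisms `A →ₐ[k] R`: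
the coarsest topology making all evaluation maps `f ↦ f a` continuous. -/
def affineTopology (k A R : Type*) [CommRing k] [CommRing A] [CommRing R]
    [Algebra k A] [Algebra k R] [TopologicalSpace R] :
    TopologicalSpace (A →ₐ[k] R) :=
  TopologicalSpace.induced (fun f (a : A) => f a) Pi.topologicalSpace

namespace SchemePoints

variable (k R : Type u) [CommRing k] [CommRing R] [Algebra k R]

/-- `Spec R` as a scheme over `Spec k`. -/
def specOver : Over (Spec (CommRingCat.of k)) :=
  Over.mk (Spec.map (CommRingCat.ofHom (algebraMap k R)))

/-- The set `X(R)` of `R`-rational points of a `k`-scheme `X`, i.e. morphisms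
`Spec R ⟶ X` over `Spec k`. -/
def pts (X : Over (Spec (CommRingCat.of k))) : Type u :=
  specOver k R ⟶ X

/-- Evaluation of a global section of `X` at an `R`-rational point. -/
def ev [TopologicalSpace R] (X : Over (Spec (CommRingCat.of k))) (g : pts k R X)
    (a : Γ(X.left, ⊤)) : R :=
  (Scheme.ΓSpecIso (CommRingCat.of R)).hom (Scheme.Hom.appTop ((Over.forget _).map g) a)

/-- The affine topology on `X(R)`. -/
def affineTop [TopologicalSpace R] (X : Over (Spec (CommRingCat.of k))) :
    TopologicalSpace (pts k R X) :=
  TopologicalSpace.induced (fun g (a : Γ(X.left, ⊤)) => ev k R X g a) Pi.topologicalSpace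

/-- The fine topology on `X(R)`: the finest topology such that for every morphism
`U ⟶ X` from an affine `k`-scheme `U`, the induced map `U(R) → X(R)` is continuous,
where `U(R)` carries the affine topology. -/
def fineTop [TopologicalSpace R] (X : Over (Spec (CommRingCat.of k))) :
    TopologicalSpace (pts k R X) :=
  ⨆ (U : Over (Spec (CommRingCat.of k))) (_ : IsAffine U.left) (φ : U ⟶ X),
    (affineTop k R U).coinduced (fun g => g ≫ φ)

end SchemePoints

namespace SchemePoints

variable {k : Type u} [CommRing k]

/-- An open subscheme of a `k`-scheme `X`, as a `k`-scheme. -/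
def opensOver (X : Over (Spec (CommRingCat.of k))) (V : X.left.Opens) :
    Over (Spec (CommRingCat.of k)) :=
  Over.mk (V.ι ≫ X.hom)

/-- The open immersion from an open subscheme of `X` into `X`, over `Spec k`. -/
def opensOverHom (X : Over (Spec (CommRingCat.of k))) (V : X.left.Opens) :
    opensOver X V ⟶ X :=
  Over.homMk V.ι rfl

end SchemePoints

/-!
Because `R` is local, every point of `Spec R` specializes to the closed point, so an `R`-point
of `X` factors through any open subscheme containing the image of the closed point; this gives
the covering `X(R) = ⋃ U_i(R)`.

The fine topology is tested on maps `φ : V ⟶ X` with `V` affine. Given an `R`-point `g` of `V`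
with `φ ∘ g ∈ W`, choose a basic open `D(f) ⊆ V` containing the image of the closed point and
mapped by `φ` into some `U_i`. Then `g` factors through `D(f)`, the map `D(f)(R) → V(R)` is an
open embedding (the hypothesis for `Γ(V) → Γ(V)_f`), and the preimage of `W` in `D(f)(R)` is
open because `D(f)(R) → X(R)` factors through `U_i(R)` and `D(f)` is affine. Its image is an
open neighbourhood of `g` inside the preimage of `W` in `V(R)`.
-/

lemma AlgebraicGeometry.Scheme.isoSpec_inv_appTop (X : Scheme.{u}) [IsAffine X] :
    X.isoSpec.inv.appTop = (Scheme.ΓSpecIso Γ(X, ⊤)).inv := by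
  rw [← cancel_mono (Scheme.ΓSpecIso Γ(X, ⊤)).hom, Iso.inv_hom_id, ← Scheme.toSpecΓ_appTop,
    ← Scheme.Hom.comp_appTop]
  exact congr(Scheme.Hom.appTop $(X.isoSpec.hom_inv_id)).trans Scheme.Hom.id_appTop

namespace SchemePoints

open IsLocalRing Topology

variable {k R : Type u} [CommRing k] [CommRing R] [Algebra k R]

def ptsMap {X Y : Over (Spec (CommRingCat.of k))} (φ : Y ⟶ X) : pts k R Y → pts k R X :=
  fun g => g ≫ φ

lemma ptsMap_id (X : Over (Spec (CommRingCat.of k))) : ptsMap (R := R) (𝟙 X) = id :=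
  funext Category.comp_id

lemma ptsMap_comp {X Y Z : Over (Spec (CommRingCat.of k))} (ψ : Z ⟶ Y) (φ : Y ⟶ X) :
    ptsMap (R := R) (ψ ≫ φ) = ptsMap φ ∘ ptsMap ψ :=
  funext fun g => (Category.assoc g ψ φ).symm

section Topologies

variable [TopologicalSpace R]

lemma continuous_ptsMap_affineTop {X Y : Over (Spec (CommRingCat.of k))} (φ : Y ⟶ X) :
    Continuous[affineTop k R Y, affineTop k R X] (ptsMap φ) := by
  let := affineTop k R Y
  have hev (b : Γ(Y.left, ⊤)) : Continuous fun g : pts k R Y => ev k R Y g b :=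
    (continuous_apply b).comp
      (continuous_induced_dom (f := fun g (a : Γ(Y.left, ⊤)) => ev k R Y g a))
  exact continuous_induced_rng.mpr (continuous_pi fun a => hev (φ.left.appTop a))

lemma isOpen_fineTop_iff {X : Over (Spec (CommRingCat.of k))} {W : Set (pts k R X)} :
    IsOpen[fineTop k R X] W ↔
      ∀ (Y : Over (Spec (CommRingCat.of k))), IsAffine Y.left → ∀ φ : Y ⟶ X,
        IsOpen[affineTop k R Y] (ptsMap φ ⁻¹' W) := by
  rw [fineTop]
  simp only [isOpen_iSup_iff]
  rfl

lemma fineTop_le_affineTop (X : Over (Spec (CommRingCat.of k))) :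
    fineTop k R X ≤ affineTop k R X :=
  iSup₂_le fun _ _ => iSup_le fun φ =>
    continuous_iff_coinduced_le.mp (continuous_ptsMap_affineTop φ)

lemma fineTop_eq_affineTop (X : Over (Spec (CommRingCat.of k))) [IsAffine X.left] :
    fineTop k R X = affineTop k R X := by
  refine (fineTop_le_affineTop X).antisymm (le_iSup₂_of_le X ‹_› (le_iSup_of_le (𝟙 X) ?_))
  have hid : (affineTop k R X).coinduced (ptsMap (𝟙 X)) = affineTop k R X := by
    rw [ptsMap_id, @coinduced_id _ (affineTop k R X)]
  exact hid.ge

lemma continuous_ptsMap_fineTop {X Y : Over (Spec (CommRingCat.of k))} (φ : Y ⟶ X) :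
    Continuous[fineTop k R Y, fineTop k R X] (ptsMap φ) := by
  refine @continuous_def _ _ (fineTop k R Y) (fineTop k R X) _ |>.mpr fun W hW => ?_
  rw [isOpen_fineTop_iff] at hW ⊢
  intro Z hZ ψ
  simpa only [← Set.preimage_comp, ← ptsMap_comp] using hW Z hZ (ψ ≫ φ)

end Topologies

instance algebraΓ (X : Over (Spec (CommRingCat.of k))) : Algebra k Γ(X.left, ⊤) :=
  ((Scheme.ΓSpecIso (CommRingCat.of k)).inv ≫ X.hom.appTop).hom.toAlgebra

variable (R) in
def evAlgHom (X : Over (Spec (CommRingCat.of k))) (g : pts k R X) :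
    Γ(X.left, ⊤) →ₐ[k] R where
  toRingHom := (g.left.appTop ≫ (Scheme.ΓSpecIso (CommRingCat.of R)).hom).hom
  commutes' c := by
    have hw : X.hom.appTop ≫ g.left.appTop =
        (Spec.map (CommRingCat.ofHom (algebraMap k R))).appTop :=
      (Scheme.Hom.comp_appTop _ _).symm.trans congr(Scheme.Hom.appTop $(Over.w g))
    have h := congr((Scheme.ΓSpecIso (CommRingCat.of k)).inv ≫ $hw ≫
      (Scheme.ΓSpecIso (CommRingCat.of R)).hom)
    rw [Scheme.ΓSpecIso_naturality, Iso.inv_hom_id_assoc] at h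
    exact congr($h c)

lemma specMap_comp_isoSpec_inv_comp_hom (X : Over (Spec (CommRingCat.of k))) [IsAffine X.left]
    (ψ : Γ(X.left, ⊤) →ₐ[k] R) :
    (Spec.map (R := Γ(X.left, ⊤)) (CommRingCat.ofHom ψ.toRingHom) ≫ X.left.isoSpec.inv) ≫
      X.hom = Spec.map (CommRingCat.ofHom (algebraMap k R)) := by
  refine ext_of_isAffine ((cancel_mono (Scheme.ΓSpecIso (CommRingCat.of R)).hom).mp ?_)
  rw [Scheme.Hom.comp_appTop, Scheme.Hom.comp_appTop, X.left.isoSpec_inv_appTop,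
    Category.assoc, Category.assoc, Scheme.ΓSpecIso_naturality, Iso.inv_hom_id_assoc,
    Scheme.ΓSpecIso_naturality, ← Iso.inv_comp_eq]
  ext c
  exact ψ.commutes c

variable (R) in
def fromAlgHom (X : Over (Spec (CommRingCat.of k))) [IsAffine X.left]
    (ψ : Γ(X.left, ⊤) →ₐ[k] R) : pts k R X :=
  Over.homMk _ (specMap_comp_isoSpec_inv_comp_hom X ψ)

lemma evAlgHom_fromAlgHom (X : Over (Spec (CommRingCat.of k))) [IsAffine X.left]
    (ψ : Γ(X.left, ⊤) →ₐ[k] R) : evAlgHom R X (fromAlgHom R X ψ) = ψ := by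
  have h : (Spec.map (R := Γ(X.left, ⊤)) (CommRingCat.ofHom ψ.toRingHom) ≫
      X.left.isoSpec.inv).appTop ≫ (Scheme.ΓSpecIso (CommRingCat.of R)).hom =
        CommRingCat.ofHom ψ.toRingHom := by
    rw [Scheme.Hom.comp_appTop, X.left.isoSpec_inv_appTop, Category.assoc,
      Scheme.ΓSpecIso_naturality, Iso.inv_hom_id_assoc]
  exact AlgHom.ext fun a => congr($h a)

lemma fromAlgHom_evAlgHom (X : Over (Spec (CommRingCat.of k))) [IsAffine X.left]
    (g : pts k R X) : fromAlgHom R X (evAlgHom R X g) = g := by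
  refine Over.OverMorphism.ext ((Iso.comp_inv_eq _).mpr ?_)
  refine ((Scheme.toSpecΓ_naturality g.left).trans ?_).symm
  change (Spec (CommRingCat.of R)).toSpecΓ ≫ _ = _
  rw [← SpecMap_ΓSpecIso_hom]
  exact (Spec.map_comp _ _).symm

variable (R) in
def ptsEquiv (X : Over (Spec (CommRingCat.of k))) [IsAffine X.left] :
    pts k R X ≃ (Γ(X.left, ⊤) →ₐ[k] R) where
  toFun := evAlgHom R X
  invFun := fromAlgHom R X
  left_inv := fromAlgHom_evAlgHom X
  right_inv := evAlgHom_fromAlgHom X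

section AffineTopology

variable [TopologicalSpace R]

lemma affineTop_eq_induced (X : Over (Spec (CommRingCat.of k))) :
    affineTop k R X = (affineTopology k Γ(X.left, ⊤) R).induced (evAlgHom R X) := by
  rw [affineTopology, induced_compose]
  rfl

variable (R) in
def ptsHomeo (X : Over (Spec (CommRingCat.of k))) [IsAffine X.left] :
    @Homeomorph (pts k R X) (Γ(X.left, ⊤) →ₐ[k] R)
      (affineTop k R X) (affineTopology k Γ(X.left, ⊤) R) :=
  let := affineTop k R X
  let := affineTopology k Γ(X.left, ⊤) R
  (ptsEquiv R X).toHomeomorphOfIsInducing ⟨affineTop_eq_induced X⟩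

variable (k R) in
def LocalizationAwayIsOpenEmbedding : Prop :=
  ∀ (A : Type u) [CommRing A] [Algebra k A] (f : A)
    (S : Type u) [CommRing S] [Algebra A S] [Algebra k S] [IsScalarTower k A S],
    IsLocalization.Away f S →
    @IsOpenEmbedding (S →ₐ[k] R) (A →ₐ[k] R) (affineTopology k S R) (affineTopology k A R)
      (fun g => g.comp (IsScalarTower.toAlgHom k A S))

instance isAffine_opensOver_basicOpen (V : Over (Spec (CommRingCat.of k))) [IsAffine V.left]
    (f : Γ(V.left, ⊤)) : IsAffine (opensOver V (V.left.basicOpen f)).left :=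
  (isAffineOpen_top V.left).basicOpen f

lemma isOpenEmbedding_ptsMap_basicOpen (hR : LocalizationAwayIsOpenEmbedding k R)
    (V : Over (Spec (CommRingCat.of k))) [IsAffine V.left] (f : Γ(V.left, ⊤)) :
    @IsOpenEmbedding _ _ (affineTop k R (opensOver V (V.left.basicOpen f))) (affineTop k R V)
      (ptsMap (opensOverHom V (V.left.basicOpen f))) := by
  set D := V.left.basicOpen f
  let : Algebra Γ(V.left, ⊤) Γ((opensOver V D).left, ⊤) := D.ι.appTop.hom.toAlgebra
  have : IsScalarTower k Γ(V.left, ⊤) Γ((opensOver V D).left, ⊤) :=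
    .of_algebraMap_eq' congr(((Scheme.ΓSpecIso (CommRingCat.of k)).inv ≫
      $(Scheme.Hom.comp_appTop D.ι V.hom)).hom)
  have hloc : IsLocalization.Away f Γ((opensOver V D).left, ⊤) :=
    Γ_restrict_isLocalization V.left f
  have hres : ptsMap (opensOverHom V D) = (ptsEquiv R V).symm ∘
      (fun ψ => ψ.comp (IsScalarTower.toAlgHom k Γ(V.left, ⊤) Γ((opensOver V D).left, ⊤))) ∘
        ptsEquiv R (opensOver V D) :=
    funext fun g => (ptsEquiv R V).eq_symm_apply.mpr (AlgHom.ext fun a => rfl)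
  rw [hres]
  let := affineTop k R (opensOver V D)
  let := affineTop k R V
  let := affineTopology k Γ(V.left, ⊤) R
  let := affineTopology k Γ((opensOver V D).left, ⊤) R
  exact (ptsHomeo R V).symm.isOpenEmbedding.comp
    ((hR _ f _ hloc).comp (ptsHomeo R (opensOver V D)).isOpenEmbedding)

end AffineTopology

def opensOverResLE {X Y : Over (Spec (CommRingCat.of k))} (φ : Y ⟶ X) (U : X.left.Opens)
    (V : Y.left.Opens) (e : V ≤ φ.left ⁻¹ᵁ U) : opensOver Y V ⟶ opensOver X U :=
  Over.homMk (φ.left.resLE U V e) <| by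
    simp only [opensOver, Over.mk_hom, Scheme.Hom.resLE_comp_ι_assoc, Over.w]

lemma opensOverResLE_comp_opensOverHom {X Y : Over (Spec (CommRingCat.of k))} (φ : Y ⟶ X)
    (U : X.left.Opens) (V : Y.left.Opens) (e : V ≤ φ.left ⁻¹ᵁ U) :
    opensOverResLE φ U V e ≫ opensOverHom X U = opensOverHom Y V ≫ φ :=
  Over.OverMorphism.ext (Scheme.Hom.resLE_comp_ι _ _)

section LocalRing

variable [IsLocalRing R]

lemma exists_ptsMap_opensOverHom_eq {X : Over (Spec (CommRingCat.of k))} (V : X.left.Opens)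
    (g : pts k R X) (hg : g.left.base (closedPoint R) ∈ V) :
    ∃ h : pts k R (opensOver X V), ptsMap (opensOverHom X V) h = g := by
  change specOver k R ⟶ X at g
  -- every point of `Spec R` specializes to the closed point, and open sets are stable under
  -- generization
  have hrange : Set.range g.left.base ⊆ Set.range V.ι.base := by
    rw [Scheme.Opens.range_ι]
    rintro _ ⟨x, rfl⟩
    exact ((specializes_closedPoint x).map g.left.base.hom.2).mem_open V.2 hg
  refine ⟨Over.homMk (IsOpenImmersion.lift (X := V.toScheme) V.ι g.left hrange) ?_, ?_⟩
  · change _ ≫ V.ι ≫ X.hom = _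
    rw [IsOpenImmersion.lift_fac_assoc, Over.w]
  · exact Over.OverMorphism.ext (IsOpenImmersion.lift_fac _ _ hrange)

lemma exists_ptsMap_opensOverHom_eq_of_iSup_eq_top {X : Over (Spec (CommRingCat.of k))}
    {ι : Type*} {U : ι → X.left.Opens} (hU : ⨆ i, U i = ⊤) (g : pts k R X) :
    ∃ i, ∃ h : pts k R (opensOver X (U i)), ptsMap (opensOverHom X (U i)) h = g := by
  obtain ⟨i, hi⟩ := Opens.mem_iSup.mp (hU ▸ Opens.mem_top (g.left.base (closedPoint R)))
  exact ⟨i, exists_ptsMap_opensOverHom_eq (U i) g hi⟩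

variable [TopologicalSpace R]

lemma isOpen_affineTop_of_forall_basicOpen (hR : LocalizationAwayIsOpenEmbedding k R)
    {V : Over (Spec (CommRingCat.of k))} [IsAffine V.left] {S : Set (pts k R V)}
    (hS : ∀ g ∈ S, ∃ f : Γ(V.left, ⊤), g.left.base (closedPoint R) ∈ V.left.basicOpen f ∧
      IsOpen[affineTop k R (opensOver V (V.left.basicOpen f))]
        (ptsMap (opensOverHom V (V.left.basicOpen f)) ⁻¹' S)) :
    IsOpen[affineTop k R V] S := by
  let := affineTop k R V
  refine isOpen_iff_forall_mem_open.mpr fun g hg => ?_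
  obtain ⟨f, hf, hopen⟩ := hS g hg
  obtain ⟨g₀, rfl⟩ := exists_ptsMap_opensOverHom_eq _ g hf
  let := affineTop k R (opensOver V (V.left.basicOpen f))
  exact ⟨_, Set.image_preimage_subset _ _,
    (isOpenEmbedding_ptsMap_basicOpen hR V f).isOpenMap _ hopen, g₀, hg, rfl⟩

lemma isOpen_fineTop_iff_of_iSup_eq_top (hR : LocalizationAwayIsOpenEmbedding k R)
    {X : Over (Spec (CommRingCat.of k))} {ι : Type*} {U : ι → X.left.Opens}
    (hU : ⨆ i, U i = ⊤) {W : Set (pts k R X)} :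
    IsOpen[fineTop k R X] W ↔ ∀ i,
      IsOpen[fineTop k R (opensOver X (U i))] (ptsMap (opensOverHom X (U i)) ⁻¹' W) := by
  refine ⟨fun hW i => continuous_def.mp (continuous_ptsMap_fineTop _) _ hW, fun hW => ?_⟩
  refine isOpen_fineTop_iff.mpr fun V _ φ => isOpen_affineTop_of_forall_basicOpen hR ?_
  intro g _
  obtain ⟨i, hi⟩ := Opens.mem_iSup.mp
    (hU ▸ Opens.mem_top (φ.left.base (g.left.base (closedPoint R))))
  obtain ⟨_, ⟨f, rfl⟩, hf, hfU⟩ :=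
    Opens.isBasis_iff_nbhd.mp (isBasis_basicOpen V.left) (show _ ∈ φ.left ⁻¹ᵁ U i from hi)
  refine ⟨f, hf, ?_⟩
  rw [← fineTop_eq_affineTop, ← Set.preimage_comp, ← ptsMap_comp,
    ← opensOverResLE_comp_opensOverHom φ (U i) _ hfU, ptsMap_comp, Set.preimage_comp]
  exact continuous_def.mp (continuous_ptsMap_fineTop _) _ (hW i)

end LocalRing

end SchemePoints

open SchemePoints Topology

theorem statement_15_general (k R : Type u) [CommRing k] [CommRing R] [Algebra k R]
    [TopologicalSpace R] [IsLocalRing R]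
    (hF4 : ∀ (A : Type u) [CommRing A] [Algebra k A] (f : A)
      (S : Type u) [CommRing S] [Algebra A S] [Algebra k S] [IsScalarTower k A S],
      IsLocalization.Away f S →
      @IsOpenEmbedding (S →ₐ[k] R) (A →ₐ[k] R) (affineTopology k S R) (affineTopology k A R)
        (fun g => g.comp (IsScalarTower.toAlgHom k A S)))
    (X : Over (Spec (CommRingCat.of k))) (ι : Type u) (U : ι → X.left.Opens)
    (hcov : (⨆ i, U i) = ⊤) :
    (∀ g : pts k R X,
      ∃ (i : ι) (h : pts k R (opensOver X (U i))), h ≫ opensOverHom X (U i) = g) ∧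
    (∀ W : Set (pts k R X),
      @IsOpen _ (fineTop k R X) W ↔
        ∀ i, @IsOpen _ (fineTop k R (opensOver X (U i)))
          ((fun h : pts k R (opensOver X (U i)) => h ≫ opensOverHom X (U i)) ⁻¹' W)) :=
  ⟨exists_ptsMap_opensOverHom_eq_of_iSup_eq_top hcov,
    fun _ => isOpen_fineTop_iff_of_iSup_eq_top hF4 hcov⟩

/-- let `R` be a `k`-algebra with a topology which is a local ring, such that
for every commutative `k`-algebra `A` and every `f ∈ A` the map
`Hom_{k-alg}(A_f, R) → Hom_{k-alg}(A, R)` induced by the localization `A → A_f` is an open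
topological embedding for the affine topologies. Then for every `k`-scheme `X` and every
affine open covering `{U_i}` of `X`: `X(R) = ⋃ᵢ U_i(R)`, and a subset `W ⊆ X(R)` is open in
the fine topology if and only if `W ∩ U_i(R)` is open in `U_i(R)` in the fine topology for
every `i`. -/
theorem statement_15 (k R : Type u) [CommRing k] [CommRing R] [Algebra k R]
    [TopologicalSpace R] [IsLocalRing R]
    (hF4 : ∀ (A : Type u) [CommRing A] [Algebra k A] (f : A)
      (S : Type u) [CommRing S] [Algebra A S] [Algebra k S] [IsScalarTower k A S],
      IsLocalization.Away f S →
      @IsOpenEmbedding (S →ₐ[k] R) (A →ₐ[k] R) (affineTopology k S R) (affineTopology k A R)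
        (fun g => g.comp (IsScalarTower.toAlgHom k A S)))
    (X : Over (Spec (CommRingCat.of k))) (ι : Type u) (U : ι → X.left.Opens)
    (hU : ∀ i, IsAffineOpen (U i)) (hcov : (⨆ i, U i) = ⊤) :
    (∀ g : pts k R X,
      ∃ (i : ι) (h : pts k R (opensOver X (U i))), h ≫ opensOverHom X (U i) = g) ∧
    (∀ W : Set (pts k R X),
      @IsOpen _ (fineTop k R X) W ↔
        ∀ i, @IsOpen _ (fineTop k R (opensOver X (U i)))
          ((fun h : pts k R (opensOver X (U i)) => h ≫ opensOverHom X (U i)) ⁻¹' W)) :=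
  statement_15_general k R hF4 X ι U hcov
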